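/- arXiv:1712.04736 — 2 statements merged into one kernel-verified Lean document; each statement's English description precedes it below -/
import Mathlib

section
/- Let X be a CAT(0) metric space, let R, δ, ε > 0 be real numbers and set k = δ/ε + 1. Let r : [0, ∞) → X be a geodesic ray, let t ∈ [0, δ], and let x ∈ X be a point with d(x, r(t + kR)) ≤ R. Then every geodesic σ : [0,1] → X from r(0) to x meets the open ball of radius ε around r(t): there exists s ∈ [0,1] with d(σ(s), r(t)) < ε. -/
open Metric Real

/-- A geodesic from `x` to `y`, parametrized affinely on `[0,1]`. -/
def IsGeodesic {X : Type*} [MetricSpace X] (σ : ℝ → X) (x y : X) : Prop :=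
  σ 0 = x ∧ σ 1 = y ∧
    ∀ s ∈ Set.Icc (0:ℝ) 1, ∀ t ∈ Set.Icc (0:ℝ) 1,
      dist (σ s) (σ t) = |s - t| * dist x y

/-- A geodesic space: every pair of points is joined by a geodesic. -/
def GeodesicMetricSpace (X : Type*) [MetricSpace X] : Prop :=
  ∀ x y : X, ∃ σ : ℝ → X, IsGeodesic σ x y

/-- The comparison point at parameter `s` on the Euclidean segment from `p` to `q`. -/
noncomputable def cmpPt (p q : EuclideanSpace ℝ (Fin 2)) (s : ℝ) : EuclideanSpace ℝ (Fin 2) :=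
  p + s • (q - p)

/-- A CAT(0) space: a geodesic space in which every geodesic triangle satisfies the
CAT(0) comparison inequality with respect to the Euclidean plane. -/
def IsCAT0 (X : Type*) [MetricSpace X] : Prop :=
  GeodesicMetricSpace X ∧
    ∀ (p q r : X) (σpq σqr σrp : ℝ → X),
      IsGeodesic σpq p q → IsGeodesic σqr q r → IsGeodesic σrp r p →
      ∀ p' q' r' : EuclideanSpace ℝ (Fin 2),
        dist p' q' = dist p q → dist q' r' = dist q r → dist r' p' = dist r p →
        ∀ (i j : Fin 3), ∀ s ∈ Set.Icc (0:ℝ) 1, ∀ t ∈ Set.Icc (0:ℝ) 1,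
          dist (![σpq, σqr, σrp] i s) (![σpq, σqr, σrp] j t) ≤
            dist (![cmpPt p' q', cmpPt q' r', cmpPt r' p'] i s)
                 (![cmpPt p' q', cmpPt q' r', cmpPt r' p'] j t)

/-- `z` is a CAT(-1) point of radius `c > 0`: every geodesic triangle contained in the
open ball `B(z, c)` admits a comparison triangle in the hyperbolic plane `ℍ²` (the upper
half-plane) for which the CAT(-1) comparison inequality holds. -/
def IsCATm1Point {X : Type*} [MetricSpace X] (z : X) (c : ℝ) : Prop :=
  0 < c ∧
    ∀ (p q r : X) (σpq σqr σrp : ℝ → X),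
      IsGeodesic σpq p q → IsGeodesic σqr q r → IsGeodesic σrp r p →
      (∀ s ∈ Set.Icc (0:ℝ) 1, σpq s ∈ Metric.ball z c) →
      (∀ s ∈ Set.Icc (0:ℝ) 1, σqr s ∈ Metric.ball z c) →
      (∀ s ∈ Set.Icc (0:ℝ) 1, σrp s ∈ Metric.ball z c) →
      ∃ (p' q' r' : UpperHalfPlane) (τpq τqr τrp : ℝ → UpperHalfPlane),
        IsGeodesic τpq p' q' ∧ IsGeodesic τqr q' r' ∧ IsGeodesic τrp r' p' ∧
        dist p' q' = dist p q ∧ dist q' r' = dist q r ∧ dist r' p' = dist r p ∧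
        ∀ (i j : Fin 3), ∀ s ∈ Set.Icc (0:ℝ) 1, ∀ t ∈ Set.Icc (0:ℝ) 1,
          dist (![σpq, σqr, σrp] i s) (![σpq, σqr, σrp] j t) ≤
            dist (![τpq, τqr, τrp] i s) (![τpq, τqr, τrp] j t)

/-- A geodesic ray: an isometric embedding of `[0, ∞)`. -/
def IsGeodesicRay {X : Type*} [MetricSpace X] (r : ℝ → X) : Prop :=
  ∀ s t : ℝ, 0 ≤ s → 0 ≤ t → dist (r s) (r t) = |s - t|

/-- A geodesic line: an isometric embedding of `ℝ`. -/
def IsGeodesicLine {X : Type*} [MetricSpace X] (γ : ℝ → X) : Prop :=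
  ∀ s t : ℝ, dist (γ s) (γ t) = |s - t|

/-- Geodesic completeness: every nondegenerate geodesic segment extends to a geodesic line. -/
def GeodesicallyComplete (X : Type*) [MetricSpace X] : Prop :=
  ∀ (x y : X) (σ : ℝ → X), IsGeodesic σ x y → x ≠ y →
    ∃ γ : ℝ → X, IsGeodesicLine γ ∧ ∀ s ∈ Set.Icc (0:ℝ) 1, σ s = γ (s * dist x y)

/-- Cocompactness: some compact set meets every orbit of the isometry group. -/
def Cocompact (X : Type*) [MetricSpace X] : Prop :=
  ∃ K : Set X, IsCompact K ∧ ∀ x : X, ∃ g : X ≃ᵢ X, g x ∈ K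

/-- The set of projections of a point `u` onto a subset `Y`. -/
def projSet {X : Type*} [MetricSpace X] (Y : Set X) (u : X) : Set X :=
  {p ∈ Y | dist u p = Metric.infDist u Y}

/-- `Y` is `B`-contracting: projections of balls disjoint from `Y` have diameter at most `B`. -/
def IsContracting {X : Type*} [MetricSpace X] (Y : Set X) (B : ℝ) : Prop :=
  0 ≤ B ∧
    ∀ (u : X) (ρ : ℝ), Disjoint (Metric.ball u ρ) Y →
      ∀ p q : X, (∃ v ∈ Metric.ball u ρ, p ∈ projSet Y v) →
        (∃ v ∈ Metric.ball u ρ, q ∈ projSet Y v) → dist p q ≤ B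

/-! In a CAT(0) space two geodesics `σ, τ` issuing from a common point satisfy
`d(σ s, τ s) ≤ s · d(σ 1, τ 1)`: the comparison inequality reduces this to Thales' theorem
in the plane. Apply it to `σ` and to the segment of `r` from `r 0` to `r T`, `T = t + kR`,
at `s = t / T`: then `τ s = r t` and `d(σ s, r t) ≤ t R / T`, which is `< ε` precisely
because `k = δ/ε + 1` and `t ≤ δ`.
-/

/- `p = 0`, `q = (a, 0)`, `r = (x, √(c² - x²))` with `2 a x = a² + c² - b²` (law of cosines);
for `a = 0` the junk value `x = 0` still works, since then `b = c`. -/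
lemma exists_euclidean_triangle {a b c : ℝ} (ha : 0 ≤ a) (hc : 0 ≤ c)
    (hab : b ≤ a + c) (hbc : c ≤ a + b) (hca : a ≤ b + c) :
    ∃ p q r : EuclideanSpace ℝ (Fin 2), dist p q = a ∧ dist q r = b ∧ dist r p = c := by
  have hb : 0 ≤ b := by linarith
  set x := (a ^ 2 + c ^ 2 - b ^ 2) / (2 * a)
  have hx : 2 * a * x = a ^ 2 + c ^ 2 - b ^ 2 := by
    rcases ha.eq_or_lt with rfl | ha
    · nlinarith
    · exact mul_div_cancel₀ _ (by positivity)
  have hx_sq_le : x ^ 2 ≤ c ^ 2 := by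
    rcases ha.eq_or_lt with rfl | ha
    · simp [x, sq_nonneg]
    · have h : (2 * a * x) ^ 2 ≤ (2 * a * c) ^ 2 := by
        have hfactor : (2 * a * c) ^ 2 - (a ^ 2 + c ^ 2 - b ^ 2) ^ 2 =
            (a + c - b) * (a + c + b) * (b - a + c) * (b + a - c) := by ring
        have hnonneg : 0 ≤ (a + c - b) * (a + c + b) * (b - a + c) * (b + a - c) := by
          have := sub_nonneg.2 hab; have := sub_nonneg.2 hbc; have := sub_nonneg.2 hca
          apply mul_nonneg (mul_nonneg (mul_nonneg ?_ ?_) ?_) ?_ <;> linarith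
        rw [hx]; linarith
      rw [mul_pow, mul_pow (2 * a)] at h
      exact le_of_mul_le_mul_left h (by positivity)
  set y := √(c ^ 2 - x ^ 2)
  have hy : y ^ 2 = c ^ 2 - x ^ 2 := Real.sq_sqrt (by linarith)
  have dist_eq (u₁ u₂ v₁ v₂ : ℝ) :
      dist !₂[u₁, u₂] !₂[v₁, v₂] = √((u₁ - v₁) ^ 2 + (u₂ - v₂) ^ 2) := by
    simp [EuclideanSpace.dist_eq, Fin.sum_univ_two, Real.dist_eq, sq_abs]
  refine ⟨!₂[0, 0], !₂[a, 0], !₂[x, y], ?_, ?_, ?_⟩ <;> rw [dist_eq]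
  · rw [show (0 - a) ^ 2 + (0 - 0) ^ 2 = a ^ 2 by ring, Real.sqrt_sq ha]
  · rw [← Real.sqrt_sq hb]; congr 1; linear_combination hy - hx
  · rw [← Real.sqrt_sq hc]; congr 1; linear_combination hy

lemma exists_comparison_triangle {X : Type*} [MetricSpace X] (p q r : X) :
    ∃ p' q' r' : EuclideanSpace ℝ (Fin 2),
      dist p' q' = dist p q ∧ dist q' r' = dist q r ∧ dist r' p' = dist r p :=
  exists_euclidean_triangle dist_nonneg dist_nonneg
    (by linarith [dist_triangle q p r, dist_comm p q, dist_comm r p])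
    (by linarith [dist_triangle r q p, dist_comm q r, dist_comm q p])
    (by linarith [dist_triangle p r q, dist_comm p r, dist_comm r q])

lemma IsGeodesic.reverse {X : Type*} [MetricSpace X] {σ : ℝ → X} {x y : X}
    (hσ : IsGeodesic σ x y) : IsGeodesic (fun s ↦ σ (1 - s)) y x := by
  obtain ⟨h0, h1, hdist⟩ := hσ
  refine ⟨by simpa using h1, by simpa using h0, fun s hs u hu ↦ ?_⟩
  have mem_Icc {v : ℝ} (hv : v ∈ Set.Icc (0 : ℝ) 1) : 1 - v ∈ Set.Icc (0 : ℝ) 1 :=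
    ⟨by linarith [hv.2], by linarith [hv.1]⟩
  rw [hdist _ (mem_Icc hs) _ (mem_Icc hu), dist_comm x y, abs_sub_comm]
  ring_nf

lemma IsGeodesicRay.isGeodesic {X : Type*} [MetricSpace X] {r : ℝ → X}
    (hr : IsGeodesicRay r) {T : ℝ} (hT : 0 ≤ T) :
    IsGeodesic (fun s ↦ r (s * T)) (r 0) (r T) := by
  refine ⟨by simp, by simp, fun s hs u hu ↦ ?_⟩
  rw [hr _ _ (mul_nonneg hs.1 hT) (mul_nonneg hu.1 hT), hr _ _ le_rfl hT, ← sub_mul, abs_mul,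
    zero_sub, abs_neg, abs_of_nonneg hT]

lemma cmpPt_dist_cmpPt (p q r : EuclideanSpace ℝ (Fin 2)) {s : ℝ} (hs : 0 ≤ s) :
    dist (cmpPt p q s) (cmpPt r p (1 - s)) = s * dist q r := by
  rw [cmpPt, cmpPt, dist_eq_norm, dist_eq_norm,
    show p + s • (q - p) - (r + (1 - s) • (p - r)) = s • (q - r) by module,
    norm_smul, Real.norm_of_nonneg hs]

lemma IsCAT0.dist_le_mul_dist {X : Type*} [MetricSpace X] (hX : IsCAT0 X) {p q r : X}
    {σ τ : ℝ → X} (hσ : IsGeodesic σ p q) (hτ : IsGeodesic τ p r) {s : ℝ}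
    (hs : s ∈ Set.Icc (0 : ℝ) 1) : dist (σ s) (τ s) ≤ s * dist q r := by
  obtain ⟨σqr, hσqr⟩ := hX.1 q r
  obtain ⟨p', q', r', hpq, hqr, hrp⟩ := exists_comparison_triangle p q r
  have hs' : 1 - s ∈ Set.Icc (0 : ℝ) 1 := ⟨by linarith [hs.2], by linarith [hs.1]⟩
  have h := hX.2 p q r σ σqr _ hσ hσqr hτ.reverse p' q' r' hpq hqr hrp 0 2 s hs (1 - s) hs'
  simp only [Matrix.cons_val_zero, Matrix.cons_val_two, Matrix.tail_cons, Matrix.head_cons,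
    sub_sub_cancel] at h
  rwa [cmpPt_dist_cmpPt p' q' r' hs.1, hqr] at h

theorem geodesic_meets_ball_along_ray_general
    (X : Type*) [MetricSpace X] (hCAT0 : IsCAT0 X)
    (R δ ε : ℝ) (hR : 0 < R) (hε : 0 < ε)
    (k : ℝ) (hk : k = δ / ε + 1)
    (r : ℝ → X) (hr : IsGeodesicRay r)
    (t : ℝ) (ht : t ∈ Set.Icc 0 δ)
    (x : X) (hx : dist x (r (t + k * R)) ≤ R)
    (σ : ℝ → X) (hσ : IsGeodesic σ (r 0) x) :
    ∃ s ∈ Set.Icc (0:ℝ) 1, dist (σ s) (r t) < ε := by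
  obtain ⟨ht0, htδ⟩ := ht
  set T := t + k * R
  have hk1 : 1 ≤ k := by rw [hk]; linarith [div_nonneg (ht0.trans htδ) hε.le]
  have hkR : R ≤ k * R := le_mul_of_one_le_left hR.le hk1
  have hT : 0 < T := by linarith
  have hs : t / T ∈ Set.Icc (0 : ℝ) 1 := ⟨by positivity, (div_le_one hT).2 (by linarith)⟩
  have hεT : t * R < ε * T := by
    have : ε * (k * R) = δ * R + ε * R := by rw [hk]; field_simp
    nlinarith [mul_le_mul_of_nonneg_right htδ hR.le, mul_pos hε hR, mul_nonneg hε.le ht0]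
  refine ⟨t / T, hs, ?_⟩
  calc dist (σ (t / T)) (r t)
      = dist (σ (t / T)) (r (t / T * T)) := by rw [div_mul_cancel₀ t hT.ne']
    _ ≤ t / T * dist x (r T) := hCAT0.dist_le_mul_dist hσ (hr.isGeodesic hT.le) hs
    _ ≤ t / T * R := mul_le_mul_of_nonneg_left hx hs.1
    _ < ε := by rwa [div_mul_eq_mul_div, div_lt_iff₀ hT]

/-- first unnamed lemma in the proof of Proposition 3.2. In a CAT(0)
space, any geodesic from `r 0` to a point `x` at distance at most `R` from `r (t + k·R)`,
where `k = δ/ε + 1` and `t ∈ [0, δ]`, meets the open ball of radius `ε` around `r t`. -/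
theorem geodesic_meets_ball_along_ray
    (X : Type*) [MetricSpace X] (hCAT0 : IsCAT0 X)
    (R δ ε : ℝ) (hR : 0 < R) (hδ : 0 < δ) (hε : 0 < ε)
    (k : ℝ) (hk : k = δ / ε + 1)
    (r : ℝ → X) (hr : IsGeodesicRay r)
    (t : ℝ) (ht : t ∈ Set.Icc 0 δ)
    (x : X) (hx : dist x (r (t + k * R)) ≤ R)
    (σ : ℝ → X) (hσ : IsGeodesic σ (r 0) x) :
    ∃ s ∈ Set.Icc (0:ℝ) 1, dist (σ s) (r t) < ε :=
  geodesic_meets_ball_along_ray_general X hCAT0 R δ ε hR hε k hk r hr t ht x hx σ hσ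
end

section
/- Let X be a CAT(0) metric space, c > 0, and let (z_n) be a sequence of points of X converging to a point z ∈ X such that every z_n is a CAT(-1) point of radius c. Then z is a CAT(-1) point of radius c/2. -/
open Metric Real

/-- Fact 3.5. In a CAT(0) space, a limit of CAT(-1) points of radius
`c` is a CAT(-1) point of radius `c/2`. -/
theorem isCATm1Point_of_tendsto
    (X : Type*) [MetricSpace X] (hCAT0 : IsCAT0 X)
    (c : ℝ) (hc : 0 < c)
    (z : X) (zseq : ℕ → X)
    (hlim : Filter.Tendsto zseq Filter.atTop (nhds z))
    (hCATm1 : ∀ n : ℕ, IsCATm1Point (zseq n) c) :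
    IsCATm1Point z (c / 2) := by
  obtain ⟨N, hN⟩ := (Metric.tendsto_atTop.1 hlim) (c / 2) (by linarith)
  have hd : dist (zseq N) z < c / 2 := hN N le_rfl
  have hsub : Metric.ball z (c / 2) ⊆ Metric.ball (zseq N) c := fun x hx => by
    rw [Metric.mem_ball] at hx ⊢
    calc dist x (zseq N) ≤ dist x z + dist z (zseq N) := dist_triangle _ _ _
      _ < c / 2 + c / 2 := by rw [dist_comm z]; linarith
      _ = c := by ring
  refine ⟨by linarith, ?_⟩
  intro p q r σpq σqr σrp h1 h2 h3 hb1 hb2 hb3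
  exact (hCATm1 N).2 p q r σpq σqr σrp h1 h2 h3
    (fun s hs => hsub (hb1 s hs)) (fun s hs => hsub (hb2 s hs))
    (fun s hs => hsub (hb3 s hs))
end
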